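/- The value E_6(e^{2πi/3}) is a real number strictly greater than 1. -/

import Mathlib

open Complex

/-- σ_k(n) = sum of k-th powers of divisors of n. -/
noncomputable def sigma' (k n : ℕ) : ℕ := ∑ d ∈ n.divisors, d ^ k

/-- The quasimodular Eisenstein series E₂. -/
noncomputable def E2 (τ : ℂ) : ℂ :=
  1 - 24 * ∑' n : ℕ, (sigma' 1 (n + 1) : ℂ) * Complex.exp (2 * Real.pi * Complex.I * τ) ^ (n + 1)

/-- The Eisenstein series E₄. -/
noncomputable def E4 (τ : ℂ) : ℂ :=
  1 + 240 * ∑' n : ℕ, (sigma' 3 (n + 1) : ℂ) * Complex.exp (2 * Real.pi * Complex.I * τ) ^ (n + 1)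

/-- The Eisenstein series E₆. -/
noncomputable def E6 (τ : ℂ) : ℂ :=
  1 - 504 * ∑' n : ℕ, (sigma' 5 (n + 1) : ℂ) * Complex.exp (2 * Real.pi * Complex.I * τ) ^ (n + 1)

/-- Ẽ_N(τ) = (N·E₂(Nτ) − E₂(τ))/(N − 1). -/
noncomputable def Etilde (N : ℕ) (τ : ℂ) : ℂ :=
  ((N : ℂ) * E2 ((N : ℂ) * τ) - E2 τ) / ((N : ℂ) - 1)

/-- The standard fundamental domain of SL₂(ℤ). -/
def FGamma : Set ℂ :=
  {τ : ℂ | 0 < τ.im ∧ -(1 / 2) ≤ τ.re ∧ τ.re < 1 / 2 ∧ 1 ≤ ‖τ‖}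

/-- The fundamental domain F_p = F_Γ ∪ ⋃_{k=0}^{p-1} ST^k(F_Γ) of Γ₀(p). -/
def Fp (p : ℕ) : Set ℂ :=
  FGamma ∪ ⋃ k ∈ Finset.range p, (fun τ : ℂ => -1 / (τ + (k : ℂ))) '' FGamma

/-!
At `ρ = e^{2πi/3}` the nome is `q = e^{2πiρ} = -e^{-π√3}`, a negative real number of size
less than `1/76`. So `E₆(ρ)` is real, and `∑ σ₅(n) qⁿ` is dominated by its first term `q < 0`:
the bound `σ₅(n + 2) ≤ 64 · 12ⁿ` makes the rest at most `64 q² / (1 - 12|q|) < |q|`.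
-/

lemma sigma'_five_le_pow_six (m : ℕ) : sigma' 5 m ≤ m ^ 6 :=
  calc sigma' 5 m ≤ ∑ _d ∈ m.divisors, m ^ 5 :=
        Finset.sum_le_sum fun d hd => Nat.pow_le_pow_left (Nat.divisor_le hd) 5
    _ ≤ m * m ^ 5 := by
        rw [Finset.sum_const, smul_eq_mul]
        exact Nat.mul_le_mul_right _ (Nat.card_divisors_le_self m)
    _ = m ^ 6 := by ring

lemma add_two_pow_six_le (k : ℕ) : (k + 2) ^ 6 ≤ 64 * 12 ^ k := by
  induction k with
  | zero => norm_num
  | succ k ih =>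
    -- `(k + 3) / (k + 2) ≤ 3 / 2` and `(3 / 2)⁶ < 12`
    have h : (2 * (k + 3)) ^ 6 ≤ (3 * (k + 2)) ^ 6 := Nat.pow_le_pow_left (by omega) 6
    rw [mul_pow, mul_pow] at h
    calc (k + 1 + 2) ^ 6 ≤ 12 * (k + 2) ^ 6 := by rw [show k + 1 + 2 = k + 3 by ring]; omega
      _ ≤ 12 * (64 * 12 ^ k) := Nat.mul_le_mul_left 12 ih
      _ = 64 * 12 ^ (k + 1) := by ring

lemma summable_sigma'_five_mul_pow {x : ℝ} (hx : |x| < 1) :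
    Summable fun n : ℕ => (sigma' 5 (n + 1) : ℝ) * x ^ (n + 1) := by
  refine Summable.of_norm_bounded
    ((summable_nat_add_iff 1).2 (summable_pow_mul_geometric_of_norm_lt_one 6
      (r := |x|) (by rwa [Real.norm_eq_abs, abs_abs]))) fun n => ?_
  rw [norm_mul, norm_pow, Real.norm_natCast, Real.norm_eq_abs]
  gcongr
  exact_mod_cast sigma'_five_le_pow_six (n + 1)

lemma tsum_sigma'_five_mul_neg_pow_lt_zero {r : ℝ} (hr0 : 0 < r) (hr : r < 1 / 76) :
    ∑' n : ℕ, (sigma' 5 (n + 1) : ℝ) * (-r) ^ (n + 1) < 0 := by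
  have hsum := summable_sigma'_five_mul_pow (x := -r) (by rw [abs_neg, abs_of_pos hr0]; linarith)
  have h12 : 12 * r < 1 := by linarith
  have hgeom : Summable fun n : ℕ => 64 * r ^ 2 * (12 * r) ^ n :=
    (summable_geometric_of_lt_one (by positivity) h12).mul_left _
  have htail : ∀ n : ℕ, (sigma' 5 (n + 1 + 1) : ℝ) * (-r) ^ (n + 1 + 1) ≤
      64 * r ^ 2 * (12 * r) ^ n := fun n =>
    calc (sigma' 5 (n + 2) : ℝ) * (-r) ^ (n + 2) ≤ (sigma' 5 (n + 2) : ℝ) * r ^ (n + 2) := by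
          gcongr (sigma' 5 (n + 2) : ℝ) * ?_
          exact (le_abs_self _).trans (by rw [abs_pow, abs_neg, abs_of_pos hr0])
      _ ≤ (64 * 12 ^ n : ℕ) * r ^ (n + 2) := by
          gcongr
          exact (sigma'_five_le_pow_six _).trans (add_two_pow_six_le n)
      _ = 64 * r ^ 2 * (12 * r) ^ n := by push_cast; ring
  have htail_le : ∑' n : ℕ, (sigma' 5 (n + 1 + 1) : ℝ) * (-r) ^ (n + 1 + 1) ≤
      64 * r ^ 2 / (1 - 12 * r) := by
    refine (Summable.tsum_le_tsum htail ((summable_nat_add_iff 1).2 hsum) hgeom).trans_eq ?_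
    rw [tsum_mul_left, tsum_geometric_of_lt_one (by positivity) h12, div_eq_mul_inv]
  -- `64 r² / (1 - 12 r) < r` is exactly `r < 1/76`
  have hkey : 64 * r ^ 2 / (1 - 12 * r) < r := by
    rw [div_lt_iff₀ (by linarith)]
    nlinarith
  rw [hsum.tsum_eq_zero_add]
  simp only [zero_add, pow_one, sigma', Nat.divisors_one, Finset.sum_singleton, one_pow,
    Nat.cast_one, one_mul] at htail_le ⊢
  linarith

lemma exp_neg_sqrt_three_mul_pi_lt : Real.exp (-(Real.sqrt 3 * Real.pi)) < 1 / 76 := by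
  have hsqrt : (1.7 : ℝ) ≤ Real.sqrt 3 := Real.le_sqrt_of_sq_le (by norm_num)
  have hpi : (3.14 : ℝ) ≤ Real.pi := Real.pi_gt_d2.le
  have hexp : (76 : ℝ) < Real.exp 5 := by
    have he : (2.7 : ℝ) ^ 5 < Real.exp 1 ^ 5 :=
      pow_lt_pow_left₀ (by linarith [Real.exp_one_gt_d9]) (by norm_num) (by norm_num)
    have h5 : Real.exp 5 = Real.exp 1 ^ 5 := by rw [Real.exp_one_pow]; norm_num
    norm_num at he
    linarith
  rw [Real.exp_neg, inv_lt_comm₀ (Real.exp_pos _) (by norm_num)]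
  calc (1 / 76 : ℝ)⁻¹ < Real.exp 5 := by norm_num [hexp]
    _ ≤ Real.exp (Real.sqrt 3 * Real.pi) := Real.exp_le_exp.2 (by nlinarith)

lemma exp_two_pi_I_div_three :
    exp (2 * Real.pi * I / 3) = (-(1 / 2) : ℝ) + (Real.sqrt 3 / 2 : ℝ) * I := by
  have hangle : 2 * Real.pi / 3 = Real.pi - Real.pi / 3 := by ring
  rw [show 2 * (Real.pi : ℂ) * I / 3 = (2 * Real.pi / 3 : ℝ) * I by push_cast; ring,
    exp_mul_I, ← ofReal_cos, ← ofReal_sin, hangle, Real.cos_pi_sub, Real.sin_pi_sub,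
    Real.cos_pi_div_three, Real.sin_pi_div_three]

lemma exp_two_pi_I_mul_exp_two_pi_I_div_three :
    exp (2 * Real.pi * I * exp (2 * Real.pi * I / 3)) = (-Real.exp (-(Real.sqrt 3 * Real.pi)) : ℝ) := by
  rw [exp_two_pi_I_div_three]
  have h : 2 * (Real.pi : ℂ) * I * ((-(1 / 2) : ℝ) + (Real.sqrt 3 / 2 : ℝ) * I)
      = (-(Real.sqrt 3 * Real.pi) : ℝ) + -(Real.pi * I) := by
    push_cast
    linear_combination (Real.sqrt 3 * Real.pi : ℂ) * I_sq
  rw [h, exp_add, ← ofReal_exp, exp_neg, exp_pi_mul_I]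
  push_cast
  ring

lemma E6_eq_ofReal_of_exp_eq_ofReal {τ : ℂ} {x : ℝ} (hq : exp (2 * Real.pi * I * τ) = x) :
    E6 τ = (1 - 504 * ∑' n : ℕ, (sigma' 5 (n + 1) : ℝ) * x ^ (n + 1) : ℝ) := by
  simp only [E6, hq, ofReal_sub, ofReal_one, ofReal_mul, ofReal_tsum, ofReal_pow, ofReal_natCast]
  norm_num

theorem E6_at_rho_real_gt_one :
    (E6 (Complex.exp (2 * Real.pi * Complex.I / 3))).im = 0 ∧
      1 < (E6 (Complex.exp (2 * Real.pi * Complex.I / 3))).re := by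
  rw [E6_eq_ofReal_of_exp_eq_ofReal exp_two_pi_I_mul_exp_two_pi_I_div_three, ofReal_im, ofReal_re]
  have hneg := tsum_sigma'_five_mul_neg_pow_lt_zero (Real.exp_pos _) exp_neg_sqrt_three_mul_pi_lt
  exact ⟨rfl, by linarith⟩
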